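/- Let X = |x⟩⟨y| be a rank-one operator on ℂ^m ⊗ ℂ^n with unit vectors x, y, and let 1 ≤ k ≤ min{m,n}. Then ‖X‖_{S(k)} = ‖X‖_op = 1 if and only if SR(x) ≤ k and SR(y) ≤ k. -/

import Mathlib

/-! The Schmidt rank of `v ∈ ℂ^m ⊗ ℂ^n` is the rank of `v` reshaped into an `m × n` matrix. Rank is
lower semicontinuous, so the vectors of Schmidt rank `≤ k` form a closed set, the unit ones a compact
set, and the supremum defining `‖X‖_{S(k)}` is attained. For `X = |x⟩⟨y|` one has
`⟨w, X z⟩ = ⟨y, z⟩ ⟨w, x⟩`, so the value `1` is attained only where both Cauchy–Schwarz inequalities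
are equalities, i.e. at `w, z` proportional to `x, y`, which have the same Schmidt rank. -/

noncomputable section

/-- The elementary tensor `a ⊗ b` in `ℂ^m ⊗ ℂ^n ≅ ℂ^(m×n)`. -/
def tens {m n : ℕ} (a : EuclideanSpace ℂ (Fin m)) (b : EuclideanSpace ℂ (Fin n)) :
    EuclideanSpace ℂ (Fin m × Fin n) :=
  WithLp.toLp 2 (fun p : Fin m × Fin n => a p.1 * b p.2)

/-- The Schmidt rank of `v ∈ ℂ^m ⊗ ℂ^n`. -/
def SR {m n : ℕ} (v : EuclideanSpace ℂ (Fin m × Fin n)) : ℕ :=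
  sInf {k | ∃ (a : Fin k → EuclideanSpace ℂ (Fin m)) (b : Fin k → EuclideanSpace ℂ (Fin n)),
    v = ∑ i, tens (a i) (b i)}

/-- `‖X‖_{S(k)} := sup { |⟨w, X z⟩| : ‖w‖ = ‖z‖ = 1, SR(w) ≤ k, SR(z) ≤ k }`. -/
def SkNorm {m n : ℕ} (k : ℕ)
    (X : EuclideanSpace ℂ (Fin m × Fin n) →L[ℂ] EuclideanSpace ℂ (Fin m × Fin n)) : ℝ :=
  sSup {t : ℝ | ∃ w z : EuclideanSpace ℂ (Fin m × Fin n),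
    ‖w‖ = 1 ∧ ‖z‖ = 1 ∧ SR w ≤ k ∧ SR z ≤ k ∧ t = ‖(inner ℂ w (X z) : ℂ)‖}

theorem ContinuousLinearMap.isClosed_setOfPred_rank_le {𝕜 E F : Type*} [NontriviallyNormedField 𝕜]
    [CompleteSpace 𝕜] [NormedAddCommGroup E] [NormedSpace 𝕜 E] [NormedAddCommGroup F]
    [NormedSpace 𝕜 F] (k : ℕ) :
    IsClosed {f : E →L[𝕜] F | (f : E →ₗ[𝕜] F).rank ≤ k} := by
  convert (isOpen_setOfPred_nat_le_rank (𝕜 := 𝕜) (E := E) (F := F) (k + 1)).isClosed_compl using 1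
  ext f
  simp only [Set.mem_ofPred_eq, Set.mem_compl_iff, not_le, Nat.cast_succ, ← Cardinal.succ_natCast,
    Order.lt_succ_iff]

theorem Matrix.isClosed_setOfPred_rank_le {𝕜 m n : Type*} [NontriviallyNormedField 𝕜]
    [CompleteSpace 𝕜] [Fintype m] [Fintype n] [DecidableEq n] (k : ℕ) :
    IsClosed {A : Matrix m n 𝕜 | A.rank ≤ k} := by
  let toCLM : Matrix m n 𝕜 →ₗ[𝕜] (n → 𝕜) →L[𝕜] (m → 𝕜) :=
    (LinearMap.toContinuousLinearMap : ((n → 𝕜) →ₗ[𝕜] (m → 𝕜)) ≃ₗ[𝕜] _).toLinearMap ∘ₗ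
      Matrix.toLin'.toLinearMap
  have hrank (A : Matrix m n 𝕜) : (toCLM A : (n → 𝕜) →ₗ[𝕜] (m → 𝕜)).rank = A.rank := by
    rw [Matrix.rank, Module.finrank_eq_rank]
    rfl
  convert (ContinuousLinearMap.isClosed_setOfPred_rank_le k).preimage
    (LinearMap.continuous_of_finiteDimensional toCLM) using 1
  ext A
  simp [hrank]

def reshape {ι κ : Type*} (v : EuclideanSpace ℂ (ι × κ)) : Matrix ι κ ℂ :=
  Matrix.of fun i j => v (i, j)

theorem continuous_reshape {ι κ : Type*} [Fintype ι] [Fintype κ] :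
    Continuous (reshape : EuclideanSpace ℂ (ι × κ) → Matrix ι κ ℂ) := by
  unfold reshape
  fun_prop

theorem reshape_smul {ι κ : Type*} (c : ℂ) (v : EuclideanSpace ℂ (ι × κ)) :
    reshape (c • v) = c • reshape v :=
  rfl

section SchmidtRank

variable {m n : ℕ}

theorem reshape_sum_tens {j : ℕ} (a : Fin j → EuclideanSpace ℂ (Fin m))
    (b : Fin j → EuclideanSpace ℂ (Fin n)) :
    reshape (∑ i, tens (a i) (b i)) =
      Matrix.of (fun p i => a i p) * Matrix.of (fun i q => b i q) := by
  ext p q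
  simp [reshape, tens, Matrix.mul_apply, WithLp.ofLp_sum]

theorem rank_reshape_le_of_eq_sum_tens {j : ℕ} {v : EuclideanSpace ℂ (Fin m × Fin n)}
    {a : Fin j → EuclideanSpace ℂ (Fin m)} {b : Fin j → EuclideanSpace ℂ (Fin n)}
    (hv : v = ∑ i, tens (a i) (b i)) : (reshape v).rank ≤ j := by
  rw [hv, reshape_sum_tens]
  exact (Matrix.rank_mul_le_left _ _).trans (Matrix.rank_le_width _)

theorem exists_eq_sum_tens_of_rank_reshape (v : EuclideanSpace ℂ (Fin m × Fin n)) :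
    ∃ (a : Fin (reshape v).rank → EuclideanSpace ℂ (Fin m))
      (b : Fin (reshape v).rank → EuclideanSpace ℂ (Fin n)), v = ∑ i, tens (a i) (b i) := by
  set A := reshape v
  let cols := Submodule.span ℂ (Set.range A.col)
  let e : Module.Basis (Fin A.rank) ℂ cols :=
    Module.finBasisOfFinrankEq ℂ cols A.rank_eq_finrank_span_cols.symm
  have hcol (q : Fin n) : A.col q ∈ cols := Submodule.subset_span ⟨q, rfl⟩
  refine ⟨fun l => WithLp.toLp 2 (e l : Fin m → ℂ),
    fun l => WithLp.toLp 2 fun q => e.repr ⟨A.col q, hcol q⟩ l, ?_⟩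
  ext ⟨p, q⟩
  calc v (p, q) = ((⟨A.col q, hcol q⟩ : cols) : Fin m → ℂ) p := rfl
    _ = _ := by
      conv_lhs => rw [← e.sum_repr ⟨A.col q, hcol q⟩]
      simp only [Submodule.coe_sum, Submodule.coe_smul, Finset.sum_apply, Pi.smul_apply,
        smul_eq_mul, tens, WithLp.ofLp_sum, mul_comm]

theorem sr_eq_rank_reshape (v : EuclideanSpace ℂ (Fin m × Fin n)) : SR v = (reshape v).rank := by
  have hdecomp := exists_eq_sum_tens_of_rank_reshape v
  refine le_antisymm (Nat.sInf_le hdecomp) ?_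
  obtain ⟨a, b, hv⟩ := Nat.sInf_mem (s := {j | ∃ (a : Fin j → EuclideanSpace ℂ (Fin m))
    (b : Fin j → EuclideanSpace ℂ (Fin n)), v = ∑ i, tens (a i) (b i)}) ⟨_, hdecomp⟩
  exact rank_reshape_le_of_eq_sum_tens hv

theorem sr_smul {c : ℂ} (hc : c ≠ 0) (v : EuclideanSpace ℂ (Fin m × Fin n)) :
    SR (c • v) = SR v := by
  rw [sr_eq_rank_reshape, sr_eq_rank_reshape, reshape_smul,
    Matrix.rank_smul_of_mem_nonZeroDivisors _ (mem_nonZeroDivisors_of_ne_zero hc)]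

theorem sr_eq_of_norm_inner_eq_one {v w : EuclideanSpace ℂ (Fin m × Fin n)} (hv : ‖v‖ = 1)
    (hw : ‖w‖ = 1) (h : ‖(inner ℂ v w : ℂ)‖ = 1) : SR w = SR v := by
  have hv0 : v ≠ 0 := norm_ne_zero_iff.1 (by simp [hv])
  have hw0 : w ≠ 0 := norm_ne_zero_iff.1 (by simp [hw])
  obtain ⟨r, hr, rfl⟩ := (norm_inner_eq_norm_iff hv0 hw0).1 (by rw [h, hv, hw, mul_one])
  exact sr_smul hr v

theorem isClosed_setOfPred_sr_le (k : ℕ) :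
    IsClosed {v : EuclideanSpace ℂ (Fin m × Fin n) | SR v ≤ k} := by
  simp only [sr_eq_rank_reshape]
  exact (Matrix.isClosed_setOfPred_rank_le k).preimage continuous_reshape

theorem isCompact_setOfPred_norm_eq_one_sr_le (k : ℕ) :
    IsCompact {v : EuclideanSpace ℂ (Fin m × Fin n) | ‖v‖ = 1 ∧ SR v ≤ k} := by
  have hset : {v : EuclideanSpace ℂ (Fin m × Fin n) | ‖v‖ = 1 ∧ SR v ≤ k} =
      Metric.sphere 0 1 ∩ {v | SR v ≤ k} := by
    ext
    simp
  rw [hset]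
  exact (isCompact_sphere 0 1).inter_right (isClosed_setOfPred_sr_le k)

variable {k : ℕ} {X : EuclideanSpace ℂ (Fin m × Fin n) →L[ℂ] EuclideanSpace ℂ (Fin m × Fin n)}

open InnerProductSpace

theorem exists_skNorm_eq_norm_inner (hX : SkNorm k X ≠ 0) :
    ∃ w z : EuclideanSpace ℂ (Fin m × Fin n), ‖w‖ = 1 ∧ ‖z‖ = 1 ∧ SR w ≤ k ∧ SR z ≤ k ∧
      SkNorm k X = ‖(inner ℂ w (X z) : ℂ)‖ := by
  set K := {v : EuclideanSpace ℂ (Fin m × Fin n) | ‖v‖ = 1 ∧ SR v ≤ k}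
  have hS : SkNorm k X = sSup ((fun p => ‖(inner ℂ p.1 (X p.2) : ℂ)‖) '' (K ×ˢ K)) := by
    rw [SkNorm]
    congr 1
    ext t
    constructor
    · rintro ⟨w, z, hw, hz, hwk, hzk, rfl⟩
      exact ⟨(w, z), ⟨⟨hw, hwk⟩, hz, hzk⟩, rfl⟩
    · rintro ⟨⟨w, z⟩, ⟨⟨hw, hwk⟩, hz, hzk⟩, rfl⟩
      exact ⟨w, z, hw, hz, hwk, hzk, rfl⟩
  have hK : IsCompact K := isCompact_setOfPred_norm_eq_one_sr_le k
  -- `sSup ∅ = 0` in `ℝ`, so a nonzero value rules out an empty feasible set.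
  have hne : ((fun p => ‖(inner ℂ p.1 (X p.2) : ℂ)‖) '' (K ×ˢ K)).Nonempty := by
    rw [Set.nonempty_iff_ne_empty]
    rintro hempty
    rw [hS, hempty, Real.sSup_empty] at hX
    exact hX rfl
  obtain ⟨⟨w, z⟩, ⟨⟨hw, hwk⟩, hz, hzk⟩, h⟩ := ((hK.prod hK).image (by fun_prop)).sSup_mem hne
  exact ⟨w, z, hw, hz, hwk, hzk, hS.trans h.symm⟩

theorem skNorm_eq_opNorm {w z : EuclideanSpace ℂ (Fin m × Fin n)} (hw : ‖w‖ = 1) (hz : ‖z‖ = 1)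
    (hwk : SR w ≤ k) (hzk : SR z ≤ k) (h : ‖(inner ℂ w (X z) : ℂ)‖ = ‖X‖) :
    SkNorm k X = ‖X‖ := by
  refine IsGreatest.csSup_eq ⟨⟨w, z, hw, hz, hwk, hzk, h.symm⟩, ?_⟩
  rintro t ⟨w', z', hw', hz', -, -, rfl⟩
  calc ‖(inner ℂ w' (X z') : ℂ)‖ ≤ ‖w'‖ * ‖X z'‖ := norm_inner_le_norm _ _
    _ ≤ ‖w'‖ * (‖X‖ * ‖z'‖) := by gcongr; exact X.le_opNorm z'
    _ = ‖X‖ := by rw [hw', hz', one_mul, mul_one]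

theorem sr_le_of_skNorm_rankOne_eq_one {x y : EuclideanSpace ℂ (Fin m × Fin n)} (hx : ‖x‖ = 1)
    (hy : ‖y‖ = 1) (h : SkNorm k (rankOne ℂ x y) = 1) : SR x ≤ k ∧ SR y ≤ k := by
  obtain ⟨w, z, hw, hz, hwk, hzk, hwz⟩ := exists_skNorm_eq_norm_inner (h ▸ one_ne_zero)
  rw [h, inner_right_rankOne_apply, norm_mul, norm_inner_symm y] at hwz
  have hwx : ‖(inner ℂ w x : ℂ)‖ ≤ 1 := by simpa [hw, hx] using norm_inner_le_norm w x
  have hzy : ‖(inner ℂ z y : ℂ)‖ ≤ 1 := by simpa [hy, hz] using norm_inner_le_norm z y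
  have hwx1 : ‖(inner ℂ w x : ℂ)‖ = 1 :=
    le_antisymm hwx (hwz.trans_le (mul_le_of_le_one_right (norm_nonneg _) hzy))
  have hzy1 : ‖(inner ℂ z y : ℂ)‖ = 1 :=
    le_antisymm hzy (hwz.trans_le (mul_le_of_le_one_left (norm_nonneg _) hwx))
  exact ⟨(sr_eq_of_norm_inner_eq_one hw hx hwx1).trans_le hwk,
    (sr_eq_of_norm_inner_eq_one hz hy hzy1).trans_le hzk⟩

theorem skNorm_rankOne_eq_one {x y : EuclideanSpace ℂ (Fin m × Fin n)} (hx : ‖x‖ = 1)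
    (hy : ‖y‖ = 1) (hxk : SR x ≤ k) (hyk : SR y ≤ k) : SkNorm k (rankOne ℂ x y) = 1 := by
  have hnorm : ‖rankOne ℂ x y‖ = 1 := by rw [norm_rankOne, hx, hy, one_mul]
  rw [← hnorm]
  refine skNorm_eq_opNorm hx hy hxk hyk ?_
  simp [inner_self_eq_norm_sq_to_K, hnorm, hx, hy]

end SchmidtRank

theorem stmt11 {m n k : ℕ}
    (x y : EuclideanSpace ℂ (Fin m × Fin n)) (hx : ‖x‖ = 1) (hy : ‖y‖ = 1) :
    (SkNorm k ((innerSL ℂ y).smulRight x) = 1 ∧ ‖(innerSL ℂ y).smulRight x‖ = 1) ↔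
    (SR x ≤ k ∧ SR y ≤ k) := by
  rw [← InnerProductSpace.rankOne_def, InnerProductSpace.norm_rankOne, hx, hy, one_mul]
  exact ⟨fun h => sr_le_of_skNorm_rankOne_eq_one hx hy h.1,
    fun ⟨hxk, hyk⟩ => ⟨skNorm_rankOne_eq_one hx hy hxk hyk, rfl⟩⟩
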